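/- Let p be a prime. Let F be a forest consisting of k vertex-disjoint stars with centers x_1, …, x_k and with h ≤ (p−1)/2 edges in total. Let S ⊆ Z_p \ {0} be an antisymmetric set with |S| = h. Then every injection f : {x_1, …, x_k} → Z_p extends to a rainbow edge-injective homomorphism f_1 : F → Cay(Z_p, S) (for the orientation of F from the centers towards the leaves) such that the image f_1(F) is an oriented graph in which every vertex has indegree at most one. -/

import Mathlib

/-!
The leaves of a star forest inject into its edges, so there are `n ≤ h < p` of them,
and each leaf `v` hangs from a unique center `c v`. Sending `v` to `g (c v) + s v` works as soon
as the colours `s v ∈ S` are pairwise distinct (rainbow) and so are the values `g (c v) + s v`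
(indegree one). Such `s` exists for any `a = g ∘ c` by Alon's additive Latin transversal
argument: the polynomial `∏_{i<j} (X j - X i) (a j + X j - a i - X i)` has degree `n (n - 1)`,
and its coefficient at `∏ X i ^ (n - 1)` equals that of the squared Vandermonde polynomial,
namely `± n!`, which is nonzero mod `p`; the Combinatorial Nullstellensatz then gives a point
of `S ^ n` where it does not vanish.
-/

open Finset Equiv Function
open scoped Nat
open Matrix (vandermonde vandermonde_apply det_apply det_vandermonde det_vandermonde_ne_zero_iff)

lemma Fin.two_mul_card_sigma_Ioi (n : ℕ) :
    2 * #(univ.sigma fun i : Fin n => Ioi i) = n * (n - 1) := by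
  rw [card_sigma, ← sum_range_id_mul_two, mul_comm, ← sum_range_reflect,
    ← Fin.sum_univ_eq_sum_range (fun i => n - 1 - i)]
  simp only [Fin.card_Ioi]

namespace MvPolynomial

section totalDegree

variable {R σ ι : Type*} [CommRing R]

lemma totalDegree_add_C_le (p : MvPolynomial σ R) (r : R) :
    (p + C r).totalDegree ≤ p.totalDegree :=
  (totalDegree_add _ _).trans_eq <| by rw [totalDegree_C, Nat.max_zero]

lemma totalDegree_X_sub_X_le (i j : σ) : (X j - X i : MvPolynomial σ R).totalDegree ≤ 1 :=
  (totalDegree_sub _ _).trans <| max_le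
    ((totalDegree_monomial_le _ _).trans_eq (by simp))
    ((totalDegree_monomial_le _ _).trans_eq (by simp))

lemma totalDegree_prod_le_card {s : Finset ι} {f : ι → MvPolynomial σ R}
    (hf : ∀ e ∈ s, (f e).totalDegree ≤ 1) : (∏ e ∈ s, f e).totalDegree ≤ #s :=
  (totalDegree_finsetProd s f).trans <| card_eq_sum_ones s ▸ sum_le_sum hf

lemma totalDegree_prod_add_C_sub_prod_lt {s : Finset ι} (hs : s.Nonempty)
    {f : ι → MvPolynomial σ R} (hf : ∀ e ∈ s, (f e).totalDegree ≤ 1) (c : ι → R) :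
    (∏ e ∈ s, (f e + C (c e)) - ∏ e ∈ s, f e).totalDegree < #s := by
  induction hs using Finset.Nonempty.cons_induction with
  | singleton e => simp
  | cons e s _ _ ih =>
    simp only [forall_mem_cons] at hf
    have hA : (∏ e ∈ s, (f e + C (c e))).totalDegree ≤ #s :=
      totalDegree_prod_le_card fun e he => (totalDegree_add_C_le _ _).trans (hf.2 e he)
    have hB := ih hf.2
    have hsplit : (f e + C (c e)) * ∏ e ∈ s, (f e + C (c e)) - f e * ∏ e ∈ s, f e
        = f e * (∏ e ∈ s, (f e + C (c e)) - ∏ e ∈ s, f e)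
          + C (c e) * ∏ e ∈ s, (f e + C (c e)) := by ring
    rw [prod_cons, prod_cons, card_cons, hsplit]
    refine (totalDegree_add _ _).trans_lt (max_lt ?_ ?_)
    · exact (totalDegree_mul _ _).trans_lt (by omega)
    · exact (totalDegree_mul _ _).trans_lt (by rw [totalDegree_C]; omega)

end totalDegree

section shiftedVandermonde

variable {R : Type*} [CommRing R] {n : ℕ}

noncomputable def shiftedVandermonde (a : Fin n → R) : MvPolynomial (Fin n) R :=
  (vandermonde fun i => C (a i) + X i).det

lemma eval_shiftedVandermonde (a x : Fin n → R) :
    eval x (shiftedVandermonde a) = (vandermonde (a + x)).det := by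
  rw [shiftedVandermonde, RingHom.map_det]
  congr 1
  ext i j
  simp [vandermonde_apply]

lemma shiftedVandermonde_eq_prod (a : Fin n → R) :
    shiftedVandermonde a
      = ∏ e ∈ univ.sigma fun i : Fin n => Ioi i, (X e.2 - X e.1 + C (a e.2 - a e.1)) := by
  rw [shiftedVandermonde, det_vandermonde, prod_sigma]
  refine prod_congr rfl fun i _ => prod_congr rfl fun j _ => ?_
  rw [map_sub]
  ring

lemma totalDegree_shiftedVandermonde_le (a : Fin n → R) :
    (shiftedVandermonde a).totalDegree ≤ #(univ.sigma fun i : Fin n => Ioi i) := by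
  rw [shiftedVandermonde_eq_prod]
  exact totalDegree_prod_le_card fun e _ =>
    (totalDegree_add_C_le _ _).trans (totalDegree_X_sub_X_le _ _)

lemma totalDegree_shiftedVandermonde_sub_lt (a : Fin n → R)
    (hn : (univ.sigma fun i : Fin n => Ioi i).Nonempty) :
    (shiftedVandermonde a - shiftedVandermonde 0).totalDegree
      < #(univ.sigma fun i : Fin n => Ioi i) := by
  simp only [shiftedVandermonde_eq_prod, Pi.zero_apply, sub_zero, map_zero, add_zero]
  exact totalDegree_prod_add_C_sub_prod_lt hn (fun e _ => totalDegree_X_sub_X_le _ _) _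

noncomputable def uniformExponent (n : ℕ) : Fin n →₀ ℕ :=
  Finsupp.equivFunOnFinite.symm fun _ => n - 1

lemma degree_uniformExponent : (uniformExponent n).degree = n * (n - 1) := by
  simp [uniformExponent, Finsupp.degree_eq_sum]

noncomputable def permExponent (σ : Perm (Fin n)) : Fin n →₀ ℕ :=
  Finsupp.equivFunOnFinite.symm fun v => (σ⁻¹ v : ℕ)

lemma shiftedVandermonde_zero :
    shiftedVandermonde (0 : Fin n → R)
      = ∑ σ : Perm (Fin n), monomial (permExponent σ) ((Perm.sign σ : ℤ) : R) := by
  rw [shiftedVandermonde, det_apply]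
  refine sum_congr rfl fun σ _ => ?_
  rw [monomial_eq, Finsupp.prod_fintype _ _ (fun _ => pow_zero _), ← Perm.sign σ |>.val.cast_id,
    Units.smul_def, zsmul_eq_mul, map_intCast]
  congr 1
  simp only [vandermonde_apply, Pi.zero_apply, map_zero, zero_add, permExponent,
    Finsupp.coe_equivFunOnFinite_symm]
  rw [← Equiv.prod_comp σ fun v => X v ^ (σ⁻¹ v : ℕ)]
  simp

lemma permExponent_add_eq_iff (σ τ : Perm (Fin n)) :
    permExponent σ + permExponent τ = uniformExponent n
      ↔ τ = σ * Fin.revPerm := by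
  simp only [Finsupp.ext_iff, Finsupp.add_apply, permExponent, uniformExponent,
    Finsupp.coe_equivFunOnFinite_symm]
  rw [← inv_inj, mul_inv_rev, show (Fin.revPerm : Perm (Fin n))⁻¹ = Fin.revPerm from rfl,
    Equiv.ext_iff]
  refine forall_congr' fun v => ?_
  rw [Perm.mul_apply, Fin.revPerm_apply, Fin.ext_iff, Fin.val_rev]
  have := (σ⁻¹ v).isLt
  omega

lemma coeff_shiftedVandermonde_zero_mul_self :
    (shiftedVandermonde (0 : Fin n → R) * shiftedVandermonde 0).coeff (uniformExponent n)
      = ((Perm.sign (Fin.revPerm : Perm (Fin n)) : ℤ) : R) * n ! := by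
  simp_rw [shiftedVandermonde_zero, sum_mul_sum, coeff_sum, monomial_mul, coeff_monomial,
    permExponent_add_eq_iff, sum_ite_eq', mem_univ, if_true, Perm.sign_mul]
  push_cast
  simp_rw [← mul_assoc, ← Int.cast_mul, ← Units.val_mul, Int.units_mul_self]
  simp [Fintype.card_perm, mul_comm]

lemma coeff_shiftedVandermonde_zero_mul (a : Fin n → R) :
    (shiftedVandermonde 0 * shiftedVandermonde a).coeff (uniformExponent n)
      = (shiftedVandermonde (0 : Fin n → R) * shiftedVandermonde 0).coeff (uniformExponent n) := by
  rw [← sub_eq_zero, ← coeff_sub, ← mul_sub]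
  obtain hempty | hne := (univ.sigma fun i : Fin n => Ioi i).eq_empty_or_nonempty
  · simp [shiftedVandermonde_eq_prod, hempty]
  refine coeff_eq_zero_of_totalDegree_lt ?_
  have hdeg := (totalDegree_mul _ _).trans_lt (Nat.add_lt_add_of_le_of_lt
    (totalDegree_shiftedVandermonde_le 0) (totalDegree_shiftedVandermonde_sub_lt a hne))
  have htwo := Fin.two_mul_card_sigma_Ioi n
  rw [← Finsupp.degree_apply, degree_uniformExponent]
  omega

end shiftedVandermonde

end MvPolynomial

open MvPolynomial in
theorem exists_injective_add_injective_fin {F : Type*} [Field F] {n : ℕ} (hn : (n ! : F) ≠ 0)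
    (S : Finset F) (hS : n ≤ #S) (a : Fin n → F) :
    ∃ s : Fin n → F, (∀ i, s i ∈ S) ∧ Injective s ∧ Injective (a + s) := by
  set P := shiftedVandermonde 0 * shiftedVandermonde a
  have hcoeff : P.coeff (uniformExponent n) ≠ 0 := by
    rw [coeff_shiftedVandermonde_zero_mul, coeff_shiftedVandermonde_zero_mul_self]
    refine mul_ne_zero ?_ hn
    rcases Int.units_eq_one_or (Perm.sign (Fin.revPerm : Perm (Fin n))) with h | h <;> simp [h]
  have hdeg : P.totalDegree = (uniformExponent n).degree := by
    refine le_antisymm ?_ (le_totalDegree (mem_support_iff.mpr hcoeff))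
    rw [degree_uniformExponent, ← Fin.two_mul_card_sigma_Ioi, two_mul]
    exact (totalDegree_mul _ _).trans (add_le_add (totalDegree_shiftedVandermonde_le _)
      (totalDegree_shiftedVandermonde_le _))
  obtain ⟨x, hxS, hx⟩ := combinatorial_nullstellensatz_exists_eval_nonzero P _ hcoeff hdeg
    (fun _ => S) fun i => by
      simp only [uniformExponent, Finsupp.coe_equivFunOnFinite_symm]
      have := i.isLt
      omega
  rw [map_mul, mul_ne_zero_iff, eval_shiftedVandermonde, eval_shiftedVandermonde, zero_add,
    det_vandermonde_ne_zero_iff, det_vandermonde_ne_zero_iff] at hx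
  exact ⟨x, hxS, hx⟩

theorem exists_injective_add_injective {ι F : Type*} [Finite ι] [Field F]
    (hι : ((Nat.card ι)! : F) ≠ 0) (S : Finset F) (hS : Nat.card ι ≤ #S) (a : ι → F) :
    ∃ s : ι → F, (∀ i, s i ∈ S) ∧ Injective s ∧ Injective (a + s) := by
  let e := Finite.equivFin ι
  obtain ⟨s, hsS, hs, has⟩ := exists_injective_add_injective_fin hι S hS (a ∘ e.symm)
  refine ⟨s ∘ e, fun i => hsS _, hs.comp e.injective, fun i j hij => e.injective (has ?_)⟩
  simpa using hij

theorem ZMod.exists_injective_add_injective {ι : Type*} [Finite ι] {p : ℕ} [Fact p.Prime]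
    (hι : Nat.card ι < p) (S : Finset (ZMod p)) (hS : Nat.card ι ≤ #S) (a : ι → ZMod p) :
    ∃ s : ι → ZMod p, (∀ i, s i ∈ S) ∧ Injective s ∧ Injective (a + s) := by
  refine _root_.exists_injective_add_injective ?_ S hS a
  rw [Ne, ZMod.natCast_eq_zero_iff, (Fact.out : p.Prime).dvd_factorial]
  omega

lemma Function.Injective.exists_extend_compl {α β γ : Type*} {x : α → β} (hx : Injective x)
    (g : α → γ) (f : ↥(Set.range x)ᶜ → γ) :
    ∃ f₁ : β → γ, (∀ i, f₁ (x i) = g i) ∧ ∀ v : ↥(Set.range x)ᶜ, f₁ v = f v := by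
  classical
  refine ⟨fun v => if hv : v ∈ Set.range x then g hv.choose else f ⟨v, hv⟩, fun i => ?_,
    fun v => dif_neg v.2⟩
  simp only [Set.mem_range_self, dite_true]
  exact congrArg g (hx (Set.mem_range_self i).choose_spec)

lemma SimpleGraph.card_compl_le_ncard_edgeSet {V : Type*} [Finite V] (G : SimpleGraph V)
    {C : Set V} (hC : ∀ v ∉ C, ∃ u ∈ C, G.Adj v u) : Nat.card ↥Cᶜ ≤ G.edgeSet.ncard := by
  choose c hcC hadj using hC
  let edge : ↥Cᶜ → G.edgeSet := fun v => ⟨s(v, c v v.2), hadj v v.2⟩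
  have hedge : Injective edge := by
    rintro ⟨v, hv⟩ ⟨w, hw⟩ hvw
    rcases Sym2.eq_iff.mp (congrArg Subtype.val hvw) with ⟨rfl, -⟩ | ⟨rfl, -⟩
    · rfl
    · exact absurd (hcC w hw) hv
  rw [← Nat.card_coe_set_eq]
  exact Nat.card_le_card_of_injective edge hedge

theorem forest_of_stars_rainbow_homomorphism_general
    (p : ℕ) (hp : p.Prime) {V : Type} [Fintype V]
    (F : SimpleGraph V) (k h : ℕ)
    (x : Fin k → V) (hx : Function.Injective x)
    (hcenters : ∀ i j : Fin k, ¬ F.Adj (x i) (x j))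
    (hstar1 : ∀ v : V, v ∉ Set.range x → ∃! u : V, F.Adj v u)
    (hstar2 : ∀ v u : V, v ∉ Set.range x → F.Adj v u → u ∈ Set.range x)
    (hedges : F.edgeSet.ncard = h) (hh : 2 * h ≤ p - 1)
    (S : Finset (ZMod p))
    (hScard : S.card = h)
    (g : Fin k → ZMod p) :
    ∃ f₁ : V → ZMod p,
      (∀ i : Fin k, f₁ (x i) = g i) ∧
      (∀ (i : Fin k) (v : V), F.Adj (x i) v → f₁ v - f₁ (x i) ∈ S) ∧
      (∀ (i j : Fin k) (v w : V), F.Adj (x i) v → F.Adj (x j) w →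
        f₁ v - f₁ (x i) = f₁ w - f₁ (x j) → i = j ∧ v = w) ∧
      (∀ v w : V, v ∉ Set.range x → w ∉ Set.range x → f₁ v = f₁ w → v = w) := by
  have := Fact.mk hp
  have hcenter : ∀ v ∉ Set.range x, ∃ i, F.Adj v (x i) := fun v hv => by
    obtain ⟨u, hu, -⟩ := hstar1 v hv
    obtain ⟨i, rfl⟩ := hstar2 v u hv hu
    exact ⟨i, hu⟩
  have hcenter_unique {v i j} (hv : v ∉ Set.range x) (hi : F.Adj v (x i))
      (hj : F.Adj v (x j)) : i = j := hx ((hstar1 v hv).unique hi hj)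
  have hleaf {i v} (hadj : F.Adj (x i) v) : v ∉ Set.range x :=
    fun ⟨j, hj⟩ => hcenters i j (hj ▸ hadj)
  choose c hc using fun v : ↥(Set.range x)ᶜ => hcenter v v.2
  have hcard : Nat.card ↥(Set.range x)ᶜ ≤ h := hedges ▸ F.card_compl_le_ncard_edgeSet
    fun v hv => (hstar1 v hv).exists.imp fun u hu => ⟨hstar2 v u hv hu, hu⟩
  obtain ⟨s, hsS, hs, hgs⟩ := ZMod.exists_injective_add_injective
    (by have := hp.two_le; omega) S (hScard ▸ hcard) (g ∘ c)
  obtain ⟨f₁, hf₁_center, hf₁_leaf⟩ := hx.exists_extend_compl g (g ∘ c + s)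
  have hdiff {i v} (hadj : F.Adj (x i) v) : f₁ v - f₁ (x i) = s ⟨v, hleaf hadj⟩ := by
    rw [hf₁_leaf ⟨v, hleaf hadj⟩, hf₁_center, Pi.add_apply, comp_apply,
      hcenter_unique (hleaf hadj) (hc ⟨v, hleaf hadj⟩) hadj.symm, add_sub_cancel_left]
  refine ⟨f₁, hf₁_center, fun i v hadj => hdiff hadj ▸ hsS _, ?_, ?_⟩
  · intro i j v w hv hw heq
    rw [hdiff hv, hdiff hw] at heq
    obtain rfl : v = w := congrArg Subtype.val (hs heq)
    exact ⟨hcenter_unique (hleaf hv) hv.symm hw.symm, rfl⟩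
  · intro v w hv hw heq
    rw [hf₁_leaf ⟨v, hv⟩, hf₁_leaf ⟨w, hw⟩] at heq
    exact congrArg Subtype.val (hgs heq)

/-- Let `p` be a prime and let `F` be a forest of `k` vertex-disjoint stars with centers
`x 0, …, x (k-1)` and `h ≤ (p−1)/2` edges in total: the centers are pairwise distinct and
non-adjacent, and every non-center vertex has exactly one neighbour, which is a center.
Let `S ⊆ ℤ_p \ {0}` be an antisymmetric set with `|S| = h`.  Then every injection of the
centers into `ℤ_p` extends to a rainbow edge-injective homomorphism `f₁` of `F` (oriented
from the centers towards the leaves) into `Cay(ℤ_p, S)` whose image has maximum indegree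
one (i.e. `f₁` is injective on non-center vertices). -/
theorem forest_of_stars_rainbow_homomorphism
    (p : ℕ) (hp : p.Prime) {V : Type} [Fintype V]
    (F : SimpleGraph V) (k h : ℕ)
    (x : Fin k → V) (hx : Function.Injective x)
    (hcenters : ∀ i j : Fin k, ¬ F.Adj (x i) (x j))
    (hstar1 : ∀ v : V, v ∉ Set.range x → ∃! u : V, F.Adj v u)
    (hstar2 : ∀ v u : V, v ∉ Set.range x → F.Adj v u → u ∈ Set.range x)
    (hedges : F.edgeSet.ncard = h) (hh : 2 * h ≤ p - 1)
    (S : Finset (ZMod p)) (hS0 : ∀ s ∈ S, s ≠ 0) (hSanti : ∀ s ∈ S, -s ∉ S)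
    (hScard : S.card = h)
    (g : Fin k → ZMod p) (hg : Function.Injective g) :
    ∃ f₁ : V → ZMod p,
      (∀ i : Fin k, f₁ (x i) = g i) ∧
      (∀ (i : Fin k) (v : V), F.Adj (x i) v → f₁ v - f₁ (x i) ∈ S) ∧
      (∀ (i j : Fin k) (v w : V), F.Adj (x i) v → F.Adj (x j) w →
        f₁ v - f₁ (x i) = f₁ w - f₁ (x j) → i = j ∧ v = w) ∧
      (∀ v w : V, v ∉ Set.range x → w ∉ Set.range x → f₁ v = f₁ w → v = w) :=
  forest_of_stars_rainbow_homomorphism_general p hp F k h x hx hcenters hstar1 hstar2 hedges hh S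
    hScard g
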